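/- arXiv:quant-ph/0502009 — 2 statements merged into one kernel-verified Lean document; each statement's English description precedes it below -/
import Mathlib

section
/- In a pure state quantum secret sharing scheme, the recoverability requirement and the secrecy requirement are equivalent: for A ⊆ P with complement B = P∖A, I(R:A) = I(R:S) holds if and only if I(R:B) = 0, given that the global state on R ⊗ A ⊗ B is pure. -/
open Matrix
open scoped ComplexOrder

noncomputable def negxlogx (x : ℝ) : ℝ := -(x * Real.log x)

/-- Von Neumann entropy of a matrix: `-∑ λᵢ log λᵢ` over the eigenvalues when the
matrix is Hermitian (and `0` otherwise, a junk value). -/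
noncomputable def vnEntropy {n : Type*} [Fintype n] [DecidableEq n] (ρ : Matrix n n ℂ) : ℝ :=
  if h : ρ.IsHermitian then ∑ i, negxlogx (h.eigenvalues i) else 0

section Tri
variable {r a b : Type*} [Fintype r] [Fintype a] [Fintype b]

/-- Reduced state on `R` of a tripartite state on `R ⊗ A ⊗ B`. -/
noncomputable def redR (ρ : Matrix (r × a × b) (r × a × b) ℂ) : Matrix r r ℂ :=
  Matrix.of fun i j => ∑ p : a × b, ρ (i, p) (j, p)

/-- Reduced state on `A`. -/
noncomputable def redA (ρ : Matrix (r × a × b) (r × a × b) ℂ) : Matrix a a ℂ :=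
  Matrix.of fun i j => ∑ k : r, ∑ l : b, ρ (k, i, l) (k, j, l)

/-- Reduced state on `B`. -/
noncomputable def redB (ρ : Matrix (r × a × b) (r × a × b) ℂ) : Matrix b b ℂ :=
  Matrix.of fun i j => ∑ k : r, ∑ p : a, ρ (k, p, i) (k, p, j)

/-- Reduced state on `A ⊗ B`. -/
noncomputable def redAB (ρ : Matrix (r × a × b) (r × a × b) ℂ) : Matrix (a × b) (a × b) ℂ :=
  Matrix.of fun p q => ∑ k : r, ρ (k, p) (k, q)

/-- Reduced state on `R ⊗ A`. -/
noncomputable def redRA (ρ : Matrix (r × a × b) (r × a × b) ℂ) : Matrix (r × a) (r × a) ℂ :=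
  Matrix.of fun x y => ∑ l : b, ρ (x.1, x.2, l) (y.1, y.2, l)

/-- Reduced state on `R ⊗ B`. -/
noncomputable def redRB (ρ : Matrix (r × a × b) (r × a × b) ℂ) : Matrix (r × b) (r × b) ℂ :=
  Matrix.of fun x y => ∑ p : a, ρ (x.1, p, x.2) (y.1, p, y.2)

end Tri


lemma roots_one_sub_C_mul_X (lam : ℝ) :
    ((((1 : Polynomial ℝ) - Polynomial.C lam * Polynomial.X).roots).map
      fun x => negxlogx x⁻¹).sum = negxlogx lam := by
  rcases eq_or_ne lam 0 with h | h
  · simp [h, negxlogx]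
  · have hfac : (1 : Polynomial ℝ) - Polynomial.C lam * Polynomial.X
        = Polynomial.C (-lam) * (Polynomial.X - Polynomial.C lam⁻¹) := by
      rw [mul_sub, ← Polynomial.C_mul, neg_mul, inv_eq_one_div, mul_one_div, div_self h]
      ring_nf
      simp [Polynomial.C_neg]
      ring
    rw [hfac, Polynomial.roots_C_mul _ (by simpa using h), Polynomial.roots_X_sub_C]
    simp [inv_inv]

lemma sum_negxlogx_eq_roots {m : Type*} [Fintype m] (lam : m → ℝ) :
    ∑ i, negxlogx (lam i)
      = (((∏ i, ((1 : Polynomial ℝ) - Polynomial.C (lam i) * Polynomial.X)).roots).map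
          fun x => negxlogx x⁻¹).sum := by
  have hne : ∀ i ∈ Finset.univ, ((1 : Polynomial ℝ) - Polynomial.C (lam i) * Polynomial.X) ≠ 0 := by
    intro i _ h
    have := congrArg (Polynomial.eval 0) h
    simp at this
  rw [Polynomial.roots_prod _ _ (Finset.prod_ne_zero_iff.2 hne), Multiset.map_bind,
    Multiset.sum_bind]
  exact Finset.sum_congr rfl fun i _ => (roots_one_sub_C_mul_X (lam i)).symm

lemma det_one_sub_smul_eq_prod {m : Type*} [Fintype m] [DecidableEq m]
    {M : Matrix m m ℂ} (hM : M.IsHermitian) (z : ℂ) :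
    (1 - z • M).det = ∏ i, (1 - z * (hM.eigenvalues i : ℂ)) := by
  set U : Matrix m m ℂ := (hM.eigenvectorUnitary : Matrix m m ℂ) with hU
  have hUU : U * star U = 1 := (Matrix.mem_unitaryGroup_iff).mp hM.eigenvectorUnitary.2
  have key : 1 - z • M
      = U * (1 - z • diagonal (RCLike.ofReal ∘ hM.eigenvalues)) * star U := by
    rw [mul_sub, sub_mul, mul_one, hUU]
    congr 1
    rw [mul_smul_comm, smul_mul_assoc]
    exact congrArg (z • ·) hM.spectral_theorem
  rw [key, Matrix.det_mul_right_comm, hUU, one_mul]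
  rw [← Matrix.diagonal_one, ← Matrix.diagonal_smul, Matrix.diagonal_sub, Matrix.det_diagonal]
  simp [Function.comp]

lemma vnEntropy_eq_of_det {m n : Type*} [Fintype m] [Fintype n] [DecidableEq m] [DecidableEq n]
    {M : Matrix m m ℂ} {N : Matrix n n ℂ} (hM : M.IsHermitian) (hN : N.IsHermitian)
    (h : ∀ z : ℂ, (1 - z • M).det = (1 - z • N).det) :
    vnEntropy M = vnEntropy N := by
  have hpoly : (∏ i, ((1 : Polynomial ℝ) - Polynomial.C (hM.eigenvalues i) * Polynomial.X))
      = ∏ j, ((1 : Polynomial ℝ) - Polynomial.C (hN.eigenvalues j) * Polynomial.X) := by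
    apply Polynomial.funext
    intro x
    have := h (x : ℂ)
    rw [det_one_sub_smul_eq_prod hM, det_one_sub_smul_eq_prod hN] at this
    have : ((∏ i, (1 - x * hM.eigenvalues i) : ℝ) : ℂ)
        = ((∏ j, (1 - x * hN.eigenvalues j) : ℝ) : ℂ) := by push_cast; exact this
    have hr := Complex.ofReal_inj.mp this
    simp only [Polynomial.eval_prod, Polynomial.eval_sub, Polynomial.eval_one, Polynomial.eval_mul,
      Polynomial.eval_C, Polynomial.eval_X]
    simpa only [mul_comm] using hr
  rw [vnEntropy, vnEntropy, dif_pos hM, dif_pos hN,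
    sum_negxlogx_eq_roots, sum_negxlogx_eq_roots, hpoly]

lemma vnEntropy_mul_conjTranspose {m n : Type*} [Fintype m] [Fintype n]
    [DecidableEq m] [DecidableEq n] (Ψ : Matrix m n ℂ) :
    vnEntropy (Ψ * Ψᴴ) = vnEntropy ((Ψᴴ * Ψ)ᵀ) := by
  refine vnEntropy_eq_of_det (Matrix.isHermitian_mul_conjTranspose_self Ψ)
    ((Matrix.isHermitian_conjTranspose_mul_self Ψ).transpose) fun z => ?_
  have h1 : z • (Ψ * Ψᴴ) = (z • Ψ) * Ψᴴ := (Matrix.smul_mul z Ψ Ψᴴ).symm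
  have h2 : z • (Ψᴴ * Ψ) = Ψᴴ * (z • Ψ) := (Matrix.mul_smul Ψᴴ z Ψ).symm
  rw [h1, Matrix.det_one_sub_mul_comm, ← h2]
  have h3 : (1 : Matrix n n ℂ) - z • (Ψᴴ * Ψ)ᵀ = ((1 : Matrix n n ℂ) - z • (Ψᴴ * Ψ))ᵀ := by
    rw [Matrix.transpose_sub, Matrix.transpose_smul, Matrix.transpose_one]
  rw [h3, Matrix.det_transpose]

/-- In a pure state QSS scheme, recoverability (`I(R:A) = I(R:S) = 2S(R)`) and secrecy
(`I(R:B) = 0` for the complementary set `B`) are equivalent. -/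
theorem stmt2 {r a b : Type*} [Fintype r] [Fintype a] [Fintype b]
    [DecidableEq r] [DecidableEq a] [DecidableEq b]
    (ρ : Matrix (r × a × b) (r × a × b) ℂ) (hpsd : ρ.PosSemidef) (htr : ρ.trace = 1)
    (ψ : r × a × b → ℂ) (hpure : ρ = Matrix.of fun x y => ψ x * star (ψ y)) :
    (vnEntropy (redR ρ) + vnEntropy (redA ρ) - vnEntropy (redRA ρ)
        = 2 * vnEntropy (redR ρ)) ↔
      (vnEntropy (redR ρ) + vnEntropy (redB ρ) - vnEntropy (redRB ρ) = 0) := by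
  subst hpure
  set Xi : Matrix (r × a) b ℂ := Matrix.of (fun x l => ψ (x.1, x.2, l)) with hXi
  set Th : Matrix (r × b) a ℂ := Matrix.of (fun x p => ψ (x.1, p, x.2)) with hTh
  have hRA : redRA (Matrix.of fun x y => ψ x * star (ψ y)) = Xi * Xiᴴ := by
    ext x y
    simp [redRA, Matrix.mul_apply, Matrix.conjTranspose_apply, hXi]
  have hB : redB (Matrix.of fun x y => ψ x * star (ψ y)) = (Xiᴴ * Xi)ᵀ := by
    ext i j
    simp [redB, Matrix.mul_apply, Matrix.conjTranspose_apply, hXi, Matrix.transpose_apply,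
      Fintype.sum_prod_type, mul_comm]
  have hRB : redRB (Matrix.of fun x y => ψ x * star (ψ y)) = Th * Thᴴ := by
    ext x y
    simp [redRB, Matrix.mul_apply, Matrix.conjTranspose_apply, hTh]
  have hA : redA (Matrix.of fun x y => ψ x * star (ψ y)) = (Thᴴ * Th)ᵀ := by
    ext i j
    simp [redA, Matrix.mul_apply, Matrix.conjTranspose_apply, hTh, Matrix.transpose_apply,
      Fintype.sum_prod_type, mul_comm]
  have e1 : vnEntropy (redRA (Matrix.of fun x y => ψ x * star (ψ y)))
      = vnEntropy (redB (Matrix.of fun x y => ψ x * star (ψ y))) := by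
    rw [hRA, hB, vnEntropy_mul_conjTranspose]
  have e2 : vnEntropy (redRB (Matrix.of fun x y => ψ x * star (ψ y)))
      = vnEntropy (redA (Matrix.of fun x y => ψ x * star (ψ y))) := by
    rw [hRB, hA, vnEntropy_mul_conjTranspose]
  constructor <;> intro h <;> linarith
end

section
/- Entropy bounds sandwich: let ρ_RAB be a pure tripartite state with subsystems satisfying S(A_t) = s + (t−1)log 2 for some subsystem A_t of A of t qubits, S(A') = (|A|−t) log 2 for A' = A ∖ A_t with |A|−t ≤ t−1, S(B) = (2t−1−|A|) log 2 for B the complement of A among the shares, and S(R) = s. Then S(A) = s + (2t−1−|A|) log 2. -/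
open Matrix
open scoped ComplexOrder

/-- Reduced state on the first half `A_t` of `A = A_t ⊗ A'`. -/
noncomputable def redAt {r at' a' b : Type*} [Fintype r] [Fintype at'] [Fintype a'] [Fintype b]
    (ρ : Matrix (r × (at' × a') × b) (r × (at' × a') × b) ℂ) : Matrix at' at' ℂ :=
  Matrix.of fun i j => ∑ k : r, ∑ p : a', ∑ l : b, ρ (k, (i, p), l) (k, (j, p), l)

/-- Reduced state on the second half `A'` of `A = A_t ⊗ A'`. -/
noncomputable def redA' {r at' a' b : Type*} [Fintype r] [Fintype at'] [Fintype a'] [Fintype b]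
    (ρ : Matrix (r × (at' × a') × b) (r × (at' × a') × b) ℂ) : Matrix a' a' ℂ :=
  Matrix.of fun i j => ∑ k : r, ∑ p : at', ∑ l : b, ρ (k, (p, i), l) (k, (p, j), l)

/-!
Purity gives `S(A) = S(RB)`: the two reduced states of a pure bipartite state are `M Mᴴ` and
`(Mᴴ M)ᵀ` for the coefficient matrix `M`, so they have the same nonzero spectrum. Subadditivity
`S(RB) ≤ S(R) + S(B)` gives `S(A) ≤ s + (2t-1-|A|) log 2`. Purity across `A_t | A' R B` together
with subadditivity gives `S(A_t) ≤ S(A') + S(RB)`, hence `S(A) ≥ S(A_t) - S(A')`, which is the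
same number.

Subadditivity is proved by measuring `ρ_XY` in the product of the eigenbases of `ρ_X` and `ρ_Y`.
The outcome distribution is the image of the spectrum of `ρ_XY` under a doubly stochastic matrix,
so its Shannon entropy is at least `S(XY)`. Its marginals are the spectra of `ρ_X` and `ρ_Y`, and
classical subadditivity finishes the proof.
-/

open Real

lemma negxlogx_eq_negMulLog : negxlogx = negMulLog := by
  rw [negMulLog_eq_neg]; rfl

section Spectrum
open Polynomial
variable {m n : Type*} [Fintype m] [Fintype n] [DecidableEq m] [DecidableEq n]

lemma Matrix.IsHermitian.vnEntropy_eq {A : Matrix n n ℂ} (hA : A.IsHermitian) :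
    vnEntropy A = ∑ i, negMulLog (hA.eigenvalues i) := by
  rw [vnEntropy, dif_pos hA, negxlogx_eq_negMulLog]

lemma Matrix.IsHermitian.sum_negMulLog_roots_X_pow_mul_charpoly {A : Matrix n n ℂ}
    (hA : A.IsHermitian) (k : ℕ) :
    ((X ^ k * A.charpoly).roots.map fun z : ℂ => negMulLog z.re).sum = vnEntropy A := by
  rw [roots_mul (mul_ne_zero (pow_ne_zero _ X_ne_zero) A.charpoly_monic.ne_zero), roots_X_pow,
    hA.roots_charpoly_eq_eigenvalues, hA.vnEntropy_eq]
  simp [Multiset.map_nsmul, Multiset.sum_nsmul]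

lemma vnEntropy_eq_of_X_pow_mul_charpoly_eq {A : Matrix m m ℂ} {B : Matrix n n ℂ}
    (hA : A.IsHermitian) (hB : B.IsHermitian) {j k : ℕ}
    (h : X ^ j * A.charpoly = X ^ k * B.charpoly) : vnEntropy A = vnEntropy B := by
  rw [← hA.sum_negMulLog_roots_X_pow_mul_charpoly j, h,
    hB.sum_negMulLog_roots_X_pow_mul_charpoly]

theorem vnEntropy_mul_conjTranspose_comm (M : Matrix m n ℂ) :
    vnEntropy (M * Mᴴ) = vnEntropy (Mᴴ * M) :=
  vnEntropy_eq_of_X_pow_mul_charpoly_eq (isHermitian_mul_conjTranspose_self M)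
    (isHermitian_conjTranspose_mul_self M) (charpoly_mul_comm' M Mᴴ)

theorem vnEntropy_mul_conjTranspose_eq_transpose (M : Matrix m n ℂ) :
    vnEntropy (M * Mᴴ) = vnEntropy (Mᵀ * Mᵀᴴ) := by
  rw [vnEntropy_mul_conjTranspose_comm, conjTranspose_transpose_eq_transpose_conjTranspose,
    ← transpose_mul]
  refine vnEntropy_eq_of_X_pow_mul_charpoly_eq (j := 0) (k := 0)
    (isHermitian_conjTranspose_mul_self M) (isHermitian_conjTranspose_mul_self M).transpose ?_
  rw [charpoly_transpose]

end Spectrum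

section Shannon
variable {ι α β : Type*} [Fintype ι] [Fintype α] [Fintype β]

theorem sum_negMulLog_le_sum_negMulLog_mulVec [DecidableEq ι] {c : Matrix ι ι ℝ}
    (hc : c ∈ doublyStochastic ℝ ι) {x : ι → ℝ} (hx : 0 ≤ x) :
    ∑ i, negMulLog (x i) ≤ ∑ j, negMulLog ((c *ᵥ x) j) := by
  calc ∑ i, negMulLog (x i) = ∑ j, ∑ i, c j i • negMulLog (x i) := by
        rw [Finset.sum_comm]
        simp_rw [smul_eq_mul, ← Finset.sum_mul, sum_col_of_mem_doublyStochastic hc, one_mul]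
    _ ≤ ∑ j, negMulLog ((c *ᵥ x) j) := Finset.sum_le_sum fun j _ =>
        concaveOn_negMulLog.le_map_sum (fun i _ => nonneg_of_mem_doublyStochastic hc)
          (sum_row_of_mem_doublyStochastic hc j) (fun i _ => hx i)

lemma negMulLog_add_mul_log_add_mul_log_le {d p q : ℝ} (hd : 0 ≤ d) (hdp : d ≤ p) (hdq : d ≤ q) :
    negMulLog d + d * log p + d * log q ≤ p * q - d := by
  rcases hd.eq_or_lt with rfl | hd
  · simpa using mul_nonneg hdp hdq
  have hp : 0 < p := hd.trans_le hdp
  have hq : 0 < q := hd.trans_le hdq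
  have hlog := log_le_sub_one_of_pos (show 0 < p * q / d by positivity)
  rw [log_div (by positivity) hd.ne', log_mul hp.ne' hq.ne'] at hlog
  have := mul_le_mul_of_nonneg_left hlog hd.le
  rw [mul_sub_one, mul_div_cancel₀ _ hd.ne'] at this
  rw [negMulLog]
  linarith

theorem sum_negMulLog_le_add_marginals {d : α × β → ℝ} (hd : 0 ≤ d) (h1 : ∑ x, d x = 1) :
    ∑ x, negMulLog (d x) ≤
      ∑ a, negMulLog (∑ b, d (a, b)) + ∑ b, negMulLog (∑ a, d (a, b)) := by
  set p := fun a => ∑ b, d (a, b)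
  set q := fun b => ∑ a, d (a, b)
  have hp : ∑ a, p a = 1 := by rw [← h1, Fintype.sum_prod_type]
  have hq : ∑ b, q b = 1 := by rw [← h1, Fintype.sum_prod_type_right]
  have hdp (a b) : d (a, b) ≤ p a :=
    Finset.single_le_sum (fun b _ => hd (a, b)) (Finset.mem_univ b)
  have hdq (a b) : d (a, b) ≤ q b :=
    Finset.single_le_sum (fun a _ => hd (a, b)) (Finset.mem_univ a)
  have hP : ∑ x : α × β, d x * log (p x.1) = -∑ a, negMulLog (p a) := by
    simp_rw [Fintype.sum_prod_type, ← Finset.sum_mul, negMulLog, neg_mul, Finset.sum_neg_distrib,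
      neg_neg, p]
  have hQ : ∑ x : α × β, d x * log (q x.2) = -∑ b, negMulLog (q b) := by
    simp_rw [Fintype.sum_prod_type_right, ← Finset.sum_mul, negMulLog, neg_mul,
      Finset.sum_neg_distrib, neg_neg, q]
  have key : ∑ x : α × β, (negMulLog (d x) + d x * log (p x.1) + d x * log (q x.2)) ≤
      ∑ x : α × β, (p x.1 * q x.2 - d x) :=
    Finset.sum_le_sum fun x _ => negMulLog_add_mul_log_add_mul_log_le (hd x) (hdp _ _) (hdq _ _)
  have hpq : ∑ x : α × β, p x.1 * q x.2 = 1 := by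
    rw [Fintype.sum_prod_type, ← Finset.sum_mul_sum, hp, hq, one_mul]
  rw [Finset.sum_sub_distrib, Finset.sum_add_distrib, Finset.sum_add_distrib, hP, hQ, hpq,
    h1] at key
  linarith

end Shannon

section Diagonal
variable {n : Type*} [Fintype n] [DecidableEq n]

lemma normSq_mem_doublyStochastic {W : Matrix n n ℂ} (hW : W ∈ unitaryGroup n ℂ) :
    (of fun i j => Complex.normSq (W i j)) ∈ doublyStochastic ℝ n := by
  rw [mem_doublyStochastic_iff_sum]
  refine ⟨fun i j => Complex.normSq_nonneg _, fun i => ?_, fun j => ?_⟩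
  · have h := congr_fun₂ (mem_unitaryGroup_iff.mp hW) i i
    simp only [mul_apply, star_apply, RCLike.star_def, Complex.mul_conj, one_apply_eq] at h
    exact_mod_cast h
  · have h := congr_fun₂ (mem_unitaryGroup_iff'.mp hW) j j
    simp only [mul_apply, star_apply, RCLike.star_def, mul_comm (starRingEnd ℂ _),
      Complex.mul_conj, one_apply_eq] at h
    exact_mod_cast h

lemma mul_diagonal_mul_conjTranspose_apply_self (W : Matrix n n ℂ) (x : n → ℝ) (j : n) :
    (W * diagonal (RCLike.ofReal ∘ x) * Wᴴ : Matrix n n ℂ) j j =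
      (((of fun i k => Complex.normSq (W i k)) *ᵥ x) j : ℝ) := by
  simp [mul_apply, diagonal_apply, mulVec, dotProduct, Complex.normSq_eq_conj_mul_self, mul_assoc,
    mul_comm, mul_left_comm]

lemma Matrix.IsHermitian.star_eigenvectorUnitary_mul_mul_self_apply {A : Matrix n n ℂ}
    (hA : A.IsHermitian) (i : n) :
    (star (hA.eigenvectorUnitary : Matrix n n ℂ) * A * hA.eigenvectorUnitary) i i =
      hA.eigenvalues i := by
  have h := hA.conjStarAlgAut_star_eigenvectorUnitary
  rw [Unitary.conjStarAlgAut_apply, Unitary.coe_star, star_star] at h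
  simp [h]

theorem Matrix.PosSemidef.vnEntropy_le_sum_negMulLog_diag {A : Matrix n n ℂ} (hA : A.PosSemidef)
    {V : Matrix n n ℂ} (hV : V ∈ unitaryGroup n ℂ) :
    vnEntropy A ≤ ∑ j, negMulLog ((star V * A * V) j j).re := by
  set U : Matrix n n ℂ := (hA.1.eigenvectorUnitary : Matrix n n ℂ)
  have hW : star V * U ∈ unitaryGroup n ℂ :=
    mul_mem (Unitary.star_mem hV) hA.1.eigenvectorUnitary.2
  have hconj : star V * A * V = (star V * U) * diagonal (RCLike.ofReal ∘ hA.1.eigenvalues) *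
      (star V * U)ᴴ := by
    conv_lhs => rw [hA.1.spectral_theorem, Unitary.conjStarAlgAut_apply]
    simp only [star_eq_conjTranspose, conjTranspose_mul, conjTranspose_conjTranspose, U,
      Matrix.mul_assoc]
  simp_rw [hconj, mul_diagonal_mul_conjTranspose_apply_self, Complex.ofReal_re, hA.1.vnEntropy_eq]
  exact sum_negMulLog_le_sum_negMulLog_mulVec (normSq_mem_doublyStochastic hW)
    hA.eigenvalues_nonneg

end Diagonal

namespace Matrix
open scoped Kronecker

variable {α β : Type*}

def partialTraceRight [Fintype β] (τ : Matrix (α × β) (α × β) ℂ) : Matrix α α ℂ :=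
  of fun a a' => ∑ b, τ (a, b) (a', b)

def partialTraceLeft [Fintype α] (τ : Matrix (α × β) (α × β) ℂ) : Matrix β β ℂ :=
  of fun b b' => ∑ a, τ (a, b) (a, b')

lemma PosSemidef.partialTraceRight [Fintype β] {τ : Matrix (α × β) (α × β) ℂ}
    (hτ : τ.PosSemidef) : τ.partialTraceRight.PosSemidef := by
  have h : τ.partialTraceRight = ∑ b, τ.submatrix (fun a => (a, b)) (fun a => (a, b)) := by
    ext; simp [Matrix.partialTraceRight, sum_apply]
  rw [h]
  exact Finset.sum_induction _ _ (fun _ _ => PosSemidef.add) PosSemidef.zero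
    fun b _ => hτ.submatrix _

lemma partialTraceRight_kronecker_one_mul_mul [Fintype α] [Fintype β] [DecidableEq β]
    (X Y : Matrix α α ℂ) (τ : Matrix (α × β) (α × β) ℂ) :
    ((X ⊗ₖ (1 : Matrix β β ℂ)) * τ * (Y ⊗ₖ 1)).partialTraceRight =
      X * τ.partialTraceRight * Y := by
  ext a a'
  simp only [partialTraceRight, of_apply, mul_apply, kroneckerMap_apply, one_apply, mul_ite,
    mul_one, mul_zero, ite_mul, zero_mul, Fintype.sum_prod_type, Finset.sum_ite_eq,
    Finset.sum_ite_eq', Finset.mem_univ, if_true, Finset.sum_mul, Finset.mul_sum]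
  rw [Finset.sum_comm]
  exact Finset.sum_congr rfl fun _ _ => Finset.sum_comm

lemma partialTraceRight_one_kronecker_mul_comm [Fintype α] [Fintype β] [DecidableEq α]
    (M : Matrix β β ℂ) (τ : Matrix (α × β) (α × β) ℂ) :
    (((1 : Matrix α α ℂ) ⊗ₖ M) * τ).partialTraceRight = (τ * (1 ⊗ₖ M)).partialTraceRight := by
  ext a a'
  simp only [partialTraceRight, of_apply, mul_apply, kroneckerMap_apply, one_apply, ite_mul,
    one_mul, zero_mul, mul_ite, mul_zero, Fintype.sum_prod_type, Finset.sum_ite_irrel,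
    Finset.sum_const_zero, Finset.sum_ite_eq, Finset.sum_ite_eq', Finset.mem_univ, if_true]
  rw [Finset.sum_comm]
  simp_rw [mul_comm]

lemma partialTraceRight_star_kronecker_mul_mul_kronecker [Fintype α] [Fintype β] [DecidableEq α]
    [DecidableEq β] (V : Matrix α α ℂ) {W : Matrix β β ℂ} (hW : W * star W = 1)
    (τ : Matrix (α × β) (α × β) ℂ) :
    (star (V ⊗ₖ W) * τ * (V ⊗ₖ W)).partialTraceRight = star V * τ.partialTraceRight * V := by
  have hK : V ⊗ₖ W = (1 ⊗ₖ W) * (V ⊗ₖ 1) := by rw [← mul_kronecker_mul, mul_one, one_mul]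
  have hK' : star (V ⊗ₖ W) = (star V ⊗ₖ 1) * (1 ⊗ₖ star W) := by
    rw [← mul_kronecker_mul, mul_one, one_mul, star_eq_conjTranspose, conjTranspose_kronecker]
    rfl
  rw [hK', hK, show (star V ⊗ₖ 1) * (1 ⊗ₖ star W) * τ * ((1 ⊗ₖ W) * (V ⊗ₖ 1)) =
      (star V ⊗ₖ 1) * ((1 ⊗ₖ star W) * (τ * (1 ⊗ₖ W))) * (V ⊗ₖ 1) by
    simp only [Matrix.mul_assoc], partialTraceRight_kronecker_one_mul_mul,
    partialTraceRight_one_kronecker_mul_comm, Matrix.mul_assoc τ, ← mul_kronecker_mul, one_mul, hW,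
    one_kronecker_one, mul_one]

lemma trace_partialTraceLeft [Fintype α] [Fintype β] (τ : Matrix (α × β) (α × β) ℂ) :
    τ.partialTraceLeft.trace = τ.trace := by
  simp [trace, partialTraceLeft, Fintype.sum_prod_type_right]

lemma PosSemidef.partialTraceLeft [Fintype α] {τ : Matrix (α × β) (α × β) ℂ}
    (hτ : τ.PosSemidef) : τ.partialTraceLeft.PosSemidef := by
  have h : τ.partialTraceLeft = ∑ a, τ.submatrix (fun b => (a, b)) (fun b => (a, b)) := by
    ext; simp [Matrix.partialTraceLeft, sum_apply]
  rw [h]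
  exact Finset.sum_induction _ _ (fun _ _ => PosSemidef.add) PosSemidef.zero
    fun a _ => hτ.submatrix _

lemma partialTraceLeft_one_kronecker_mul_mul [Fintype α] [Fintype β] [DecidableEq α]
    (X Y : Matrix β β ℂ) (τ : Matrix (α × β) (α × β) ℂ) :
    (((1 : Matrix α α ℂ) ⊗ₖ X) * τ * (1 ⊗ₖ Y)).partialTraceLeft =
      X * τ.partialTraceLeft * Y := by
  ext b b'
  simp only [partialTraceLeft, of_apply, mul_apply, kroneckerMap_apply, one_apply, ite_mul,
    one_mul, zero_mul, mul_ite, mul_zero, Fintype.sum_prod_type, Finset.sum_ite_irrel,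
    Finset.sum_const_zero, Finset.sum_ite_eq, Finset.sum_ite_eq', Finset.mem_univ, if_true,
    Finset.sum_mul, Finset.mul_sum]
  rw [Finset.sum_comm]
  exact Finset.sum_congr rfl fun _ _ => Finset.sum_comm

lemma partialTraceLeft_kronecker_one_mul_comm [Fintype α] [Fintype β] [DecidableEq β]
    (M : Matrix α α ℂ) (τ : Matrix (α × β) (α × β) ℂ) :
    ((M ⊗ₖ (1 : Matrix β β ℂ)) * τ).partialTraceLeft = (τ * (M ⊗ₖ 1)).partialTraceLeft := by
  ext b b'
  simp only [partialTraceLeft, of_apply, mul_apply, kroneckerMap_apply, one_apply, mul_ite,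
    mul_one, mul_zero, ite_mul, zero_mul, Fintype.sum_prod_type, Finset.sum_ite_eq,
    Finset.sum_ite_eq', Finset.mem_univ, if_true]
  rw [Finset.sum_comm]
  simp_rw [mul_comm]

lemma partialTraceLeft_star_kronecker_mul_mul_kronecker [Fintype α] [Fintype β] [DecidableEq α]
    [DecidableEq β] {V : Matrix α α ℂ} (hV : V * star V = 1) (W : Matrix β β ℂ)
    (τ : Matrix (α × β) (α × β) ℂ) :
    (star (V ⊗ₖ W) * τ * (V ⊗ₖ W)).partialTraceLeft = star W * τ.partialTraceLeft * W := by
  have hK : V ⊗ₖ W = (V ⊗ₖ 1) * (1 ⊗ₖ W) := by rw [← mul_kronecker_mul, mul_one, one_mul]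
  have hK' : star (V ⊗ₖ W) = (1 ⊗ₖ star W) * (star V ⊗ₖ 1) := by
    rw [← mul_kronecker_mul, mul_one, one_mul, star_eq_conjTranspose, conjTranspose_kronecker]
    rfl
  rw [hK', hK, show (1 ⊗ₖ star W) * (star V ⊗ₖ 1) * τ * ((V ⊗ₖ 1) * (1 ⊗ₖ W)) =
      (1 ⊗ₖ star W) * ((star V ⊗ₖ 1) * (τ * (V ⊗ₖ 1))) * (1 ⊗ₖ W) by
    simp only [Matrix.mul_assoc], partialTraceLeft_one_kronecker_mul_mul,
    partialTraceLeft_kronecker_one_mul_comm, Matrix.mul_assoc τ, ← mul_kronecker_mul, one_mul, hV,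
    one_kronecker_one, mul_one]

end Matrix

open scoped Kronecker in
theorem Matrix.PosSemidef.vnEntropy_le_partialTraceRight_add_partialTraceLeft
    {α β : Type*} [Fintype α] [Fintype β] [DecidableEq α] [DecidableEq β]
    {τ : Matrix (α × β) (α × β) ℂ} (hτ : τ.PosSemidef) (htr : τ.trace = 1) :
    vnEntropy τ ≤ vnEntropy τ.partialTraceRight + vnEntropy τ.partialTraceLeft := by
  set hR := hτ.partialTraceRight.1
  set hL := hτ.partialTraceLeft.1
  set V : Matrix α α ℂ := (hR.eigenvectorUnitary : Matrix α α ℂ)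
  set W : Matrix β β ℂ := (hL.eigenvectorUnitary : Matrix β β ℂ)
  have hK : V ⊗ₖ W ∈ unitaryGroup (α × β) ℂ :=
    kronecker_mem_unitary hR.eigenvectorUnitary.2 hL.eigenvectorUnitary.2
  set σ := star (V ⊗ₖ W) * τ * (V ⊗ₖ W)
  set d : α × β → ℝ := fun x => (σ x x).re
  have hd : 0 ≤ d := fun x =>
    Complex.nonneg_iff.mp ((hτ.conjTranspose_mul_mul_same (V ⊗ₖ W)).diag_nonneg) |>.1
  have hd1 : ∑ x, d x = 1 := by
    have : σ.trace = 1 := by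
      rw [trace_mul_cycle, Unitary.mul_star_self_of_mem hK, Matrix.one_mul, htr]
    simpa [d, trace, Complex.re_sum] using congrArg Complex.re this
  have hp (a : α) : ∑ b, d (a, b) = hR.eigenvalues a := by
    have := congrArg Complex.re (hR.star_eigenvectorUnitary_mul_mul_self_apply a)
    rwa [← partialTraceRight_star_kronecker_mul_mul_kronecker V
      (Unitary.mul_star_self_of_mem hL.eigenvectorUnitary.2), Matrix.partialTraceRight, of_apply,
      Complex.re_sum, Complex.ofReal_re] at this
  have hq (b : β) : ∑ a, d (a, b) = hL.eigenvalues b := by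
    have := congrArg Complex.re (hL.star_eigenvectorUnitary_mul_mul_self_apply b)
    rwa [← partialTraceLeft_star_kronecker_mul_mul_kronecker
      (Unitary.mul_star_self_of_mem hR.eigenvectorUnitary.2) W, Matrix.partialTraceLeft, of_apply,
      Complex.re_sum, Complex.ofReal_re] at this
  calc vnEntropy τ ≤ ∑ x, negMulLog (d x) := hτ.vnEntropy_le_sum_negMulLog_diag hK
    _ ≤ ∑ a, negMulLog (∑ b, d (a, b)) + ∑ b, negMulLog (∑ a, d (a, b)) :=
      sum_negMulLog_le_add_marginals hd hd1
    _ = vnEntropy τ.partialTraceRight + vnEntropy τ.partialTraceLeft := by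
      simp_rw [hp, hq, hR.vnEntropy_eq, hL.vnEntropy_eq]

theorem vnEntropy_partialTraceRight_eq_partialTraceLeft_of_pure {ι κ : Type*} [Fintype ι]
    [Fintype κ] [DecidableEq ι] [DecidableEq κ] {ρ : Matrix (ι × κ) (ι × κ) ℂ} {ψ : ι × κ → ℂ}
    (hρ : ρ = of fun x y => ψ x * star (ψ y)) :
    vnEntropy ρ.partialTraceRight = vnEntropy ρ.partialTraceLeft := by
  set M : Matrix ι κ ℂ := of fun i k => ψ (i, k)
  have hR : ρ.partialTraceRight = M * Mᴴ := by ext; simp [partialTraceRight, hρ, mul_apply, M]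
  have hL : ρ.partialTraceLeft = Mᵀ * Mᵀᴴ := by ext; simp [partialTraceLeft, hρ, mul_apply, M]
  rw [hR, hL, vnEntropy_mul_conjTranspose_eq_transpose]

def Equiv.prodLeftComm (α β γ : Type*) : α × β × γ ≃ β × α × γ where
  toFun x := (x.2.1, x.1, x.2.2)
  invFun x := (x.2.1, x.1, x.2.2)

lemma Matrix.trace_submatrix_equiv {m n : Type*} [Fintype m] [Fintype n] (A : Matrix n n ℂ)
    (e : m ≃ n) : (A.submatrix e e).trace = A.trace :=
  e.sum_comp fun i => A i i

section Tripartite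
variable {r a b : Type*}

lemma partialTraceRight_submatrix_prodLeftComm [Fintype r] [Fintype b]
    (ρ : Matrix (r × a × b) (r × a × b) ℂ) :
    (ρ.submatrix (Equiv.prodLeftComm a r b) (Equiv.prodLeftComm a r b)).partialTraceRight =
      redA ρ := by
  ext; simp [partialTraceRight, redA, Equiv.prodLeftComm, Fintype.sum_prod_type]

lemma partialTraceLeft_submatrix_prodLeftComm [Fintype a] (ρ : Matrix (r × a × b) (r × a × b) ℂ) :
    (ρ.submatrix (Equiv.prodLeftComm a r b) (Equiv.prodLeftComm a r b)).partialTraceLeft =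
      redRB ρ := by
  ext; simp [partialTraceLeft, redRB, Equiv.prodLeftComm]

lemma partialTraceRight_redRB [Fintype a] [Fintype b] (ρ : Matrix (r × a × b) (r × a × b) ℂ) :
    (redRB ρ).partialTraceRight = redR ρ := by
  ext
  simp only [partialTraceRight, redRB, redR, of_apply, Fintype.sum_prod_type]
  exact Finset.sum_comm

lemma partialTraceLeft_redRB [Fintype r] [Fintype a] (ρ : Matrix (r × a × b) (r × a × b) ℂ) :
    (redRB ρ).partialTraceLeft = redB ρ := by
  ext; simp [partialTraceLeft, redRB, redB]

variable [Fintype r] [Fintype a] [Fintype b] [DecidableEq r] [DecidableEq b]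
  {ρ : Matrix (r × a × b) (r × a × b) ℂ}

theorem vnEntropy_redA_eq_vnEntropy_redRB_of_pure [DecidableEq a] {ψ : r × a × b → ℂ}
    (hpure : ρ = of fun x y => ψ x * star (ψ y)) : vnEntropy (redA ρ) = vnEntropy (redRB ρ) := by
  rw [← partialTraceRight_submatrix_prodLeftComm, ← partialTraceLeft_submatrix_prodLeftComm]
  exact vnEntropy_partialTraceRight_eq_partialTraceLeft_of_pure
    (ψ := ψ ∘ Equiv.prodLeftComm a r b) (by rw [hpure]; rfl)

theorem vnEntropy_redRB_le (hρ : ρ.PosSemidef) (htr : ρ.trace = 1) :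
    vnEntropy (redRB ρ) ≤ vnEntropy (redR ρ) + vnEntropy (redB ρ) := by
  rw [← partialTraceRight_redRB, ← partialTraceLeft_redRB,
    ← partialTraceLeft_submatrix_prodLeftComm]
  refine (hρ.submatrix _).partialTraceLeft.vnEntropy_le_partialTraceRight_add_partialTraceLeft ?_
  rw [trace_partialTraceLeft, trace_submatrix_equiv, htr]

end Tripartite

theorem vnEntropy_redAt_le_of_pure {r at' a' b : Type*} [Fintype r]
    [Fintype at'] [Fintype a'] [Fintype b] [DecidableEq r] [DecidableEq at'] [DecidableEq a']
    [DecidableEq b] {ρ : Matrix (r × (at' × a') × b) (r × (at' × a') × b) ℂ}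
    (hρ : ρ.PosSemidef) (htr : ρ.trace = 1) {ψ : r × (at' × a') × b → ℂ}
    (hpure : ρ = of fun x y => ψ x * star (ψ y)) :
    vnEntropy (redAt ρ) ≤ vnEntropy (redA' ρ) + vnEntropy (redRB ρ) := by
  set e := (Equiv.prodAssoc at' a' (r × b)).symm.trans (Equiv.prodLeftComm (at' × a') r b)
  set ρ' := ρ.submatrix e e
  have hAt : ρ'.partialTraceRight = redAt ρ := by
    ext
    simp only [Matrix.partialTraceRight, redAt, ρ', e, Equiv.prodLeftComm, Equiv.coe_trans,
      Equiv.coe_fn_mk, Function.comp_apply, Equiv.prodAssoc_symm_apply, submatrix_apply, of_apply,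
      Fintype.sum_prod_type]
    exact Finset.sum_comm
  have hA' : ρ'.partialTraceLeft.partialTraceRight = redA' ρ := by
    ext
    simp only [Matrix.partialTraceRight, Matrix.partialTraceLeft, redA', ρ', e,
      Equiv.prodLeftComm, Equiv.coe_trans, Equiv.coe_fn_mk, Function.comp_apply,
      Equiv.prodAssoc_symm_apply, submatrix_apply, of_apply, Fintype.sum_prod_type]
    exact Finset.sum_congr rfl fun _ _ => Finset.sum_comm
  have hRB : ρ'.partialTraceLeft.partialTraceLeft = redRB ρ := by
    ext
    simp only [Matrix.partialTraceLeft, redRB, ρ', e, Equiv.prodLeftComm, Equiv.coe_trans,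
      Equiv.coe_fn_mk, Function.comp_apply, Equiv.prodAssoc_symm_apply, submatrix_apply, of_apply,
      Fintype.sum_prod_type]
    exact Finset.sum_comm
  rw [← hAt, ← hA', ← hRB, vnEntropy_partialTraceRight_eq_partialTraceLeft_of_pure
    (ψ := ψ ∘ e) (by simp only [ρ', hpure]; rfl)]
  refine (hρ.submatrix e).partialTraceLeft.vnEntropy_le_partialTraceRight_add_partialTraceLeft ?_
  rw [trace_partialTraceLeft, trace_submatrix_equiv, htr]

theorem stmt10_general {r at' a' b : Type*} [Fintype r] [Fintype at'] [Fintype a'] [Fintype b]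
    [DecidableEq r] [DecidableEq at'] [DecidableEq a'] [DecidableEq b]
    (ρ : Matrix (r × (at' × a') × b) (r × (at' × a') × b) ℂ)
    (hpsd : ρ.PosSemidef) (htr : ρ.trace = 1)
    (ψ : r × (at' × a') × b → ℂ) (hpure : ρ = Matrix.of fun x y => ψ x * star (ψ y))
    (s : ℝ) (t nA : ℕ)
    (h1 : vnEntropy (redAt ρ) = s + ((t : ℝ) - 1) * Real.log 2)
    (h2 : vnEntropy (redA' ρ) = ((nA : ℝ) - t) * Real.log 2)
    (h3 : vnEntropy (redB ρ) = (2 * (t : ℝ) - 1 - nA) * Real.log 2)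
    (h4 : vnEntropy (redR ρ) = s) :
    vnEntropy (redA ρ) = s + (2 * (t : ℝ) - 1 - nA) * Real.log 2 := by
  have hRB := vnEntropy_redRB_le hpsd htr
  have hAt := vnEntropy_redAt_le_of_pure hpsd htr hpure
  rw [vnEntropy_redA_eq_vnEntropy_redRB_of_pure hpure]
  linarith

/-- Entropy sandwich: for a pure global state with `S(A_t) = s + (t−1)log 2`,
`S(A') = (|A|−t)log 2`, `S(B) = (2t−1−|A|)log 2` and `S(R) = s`, one gets
`S(A) = s + (2t−1−|A|)log 2`. -/
theorem stmt10 {r at' a' b : Type*} [Fintype r] [Fintype at'] [Fintype a'] [Fintype b]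
    [DecidableEq r] [DecidableEq at'] [DecidableEq a'] [DecidableEq b]
    (ρ : Matrix (r × (at' × a') × b) (r × (at' × a') × b) ℂ)
    (hpsd : ρ.PosSemidef) (htr : ρ.trace = 1)
    (ψ : r × (at' × a') × b → ℂ) (hpure : ρ = Matrix.of fun x y => ψ x * star (ψ y))
    (s : ℝ) (t nA : ℕ) (ht : t ≤ nA) (hs : 0 ≤ s)
    (hA : (nA : ℝ) - t ≤ (t : ℝ) - 1)
    (h1 : vnEntropy (redAt ρ) = s + ((t : ℝ) - 1) * Real.log 2)
    (h2 : vnEntropy (redA' ρ) = ((nA : ℝ) - t) * Real.log 2)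
    (h3 : vnEntropy (redB ρ) = (2 * (t : ℝ) - 1 - nA) * Real.log 2)
    (h4 : vnEntropy (redR ρ) = s) :
    vnEntropy (redA ρ) = s + (2 * (t : ℝ) - 1 - nA) * Real.log 2 :=
  stmt10_general ρ hpsd htr ψ hpure s t nA h1 h2 h3 h4
end
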